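/- arXiv:0805.2852 — 2 statements merged into one kernel-verified Lean document; each statement's English description precedes it below -/
import Mathlib

section
/- The map α_1 ↦ β_1h², α_2 ↦ β_2h², α_3 ↦ -(β_1h²+β_2h²)/(1+β_1β_2h⁴) defines an injective field homomorphism from L = ℚ(α_1,α_2,α_3 ; α_1+α_2+α_3+α_1α_2α_3 = 0) into ℚ(β_1,β_2)((h)). -/
/-!
Solving `α₁ + α₂ + α₃ + α₁α₂α₃ = 0` for `α₃` identifies `L` with `ℚ(α₁, α₂)`: over
`ℚ[α₁, α₂]` the relation is the linear polynomial `(1 + α₁α₂) X + (α₁ + α₂)` with coprime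
coefficients, so by Gauss's lemma it generates the kernel of `X ↦ -(α₁ + α₂) / (1 + α₁α₂)`.
It remains to embed `ℚ(α₁, α₂)` into `ℚ(β₁, β₂)((h))` by `αᵢ ↦ βᵢh²`. This is injective on
polynomials: `p(β₁h², β₂h²) = 0` forces `p(β₁t, β₂t) = 0` in `ℚ(β₁, β₂)[t]`, hence
`p(β₁, β₂) = 0` at `t = 1`, and `β₁, β₂` are algebraically independent.
-/

open MvPolynomial

namespace Polynomial

theorem isPrimitive_C_mul_X_add_C {R : Type*} [CommSemiring R] {a b : R} (h : IsRelPrime a b) :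
    (C a * X + C b).IsPrimitive := by
  intro r hr
  rw [C_dvd_iff_dvd_coeff] at hr
  exact h (by simpa using hr 1) (by simpa using hr 0)

variable {R : Type*} [CommRing R] [IsDomain R] [IsGCDMonoid R]
  {K : Type*} [Field K] [Algebra R K] [IsFractionRing R K]

theorem ker_aeval_neg_div_eq_span_of_isRelPrime {a b : R} (ha : a ≠ 0) (hab : IsRelPrime a b) :
    RingHom.ker (aeval (-algebraMap R K b / algebraMap R K a)) = Ideal.span {C a * X + C b} := by
  have ha' : algebraMap R K a ≠ 0 := (map_ne_zero_iff _ (IsFractionRing.injective R K)).mpr ha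
  have hmap : (C a * X + C b).map (algebraMap R K)
      = C (algebraMap R K a) * (X - C (-algebraMap R K b / algebraMap R K a)) := by
    rw [mul_sub, ← C_mul, mul_div_cancel₀ _ ha', C_neg, sub_neg_eq_add]
    simp only [Polynomial.map_add, Polynomial.map_mul, map_C, map_X]
  ext p
  rw [RingHom.mem_ker, Ideal.mem_span_singleton,
    (isPrimitive_C_mul_X_add_C hab).dvd_iff_fraction_map_dvd_fraction_map K, hmap,
    C_mul_dvd (by simpa using ha'), dvd_iff_isRoot, IsRoot, eval_map_algebraMap]

end Polynomial

namespace MvPolynomial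

section LaurentSeries

variable {σ A R : Type*} [CommSemiring A] [CommSemiring R] [Algebra A R]

theorem injective_aeval_C_mul_X {γ : σ → R}
    (hγ : Function.Injective (aeval γ : MvPolynomial σ A →ₐ[A] R)) :
    Function.Injective (aeval (fun i => Polynomial.C (γ i) * Polynomial.X) :
      MvPolynomial σ A →ₐ[A] Polynomial R) := by
  have h : ((Polynomial.aeval (1 : R)).restrictScalars A).comp
      (aeval fun i => Polynomial.C (γ i) * Polynomial.X) = aeval γ := by
    ext i
    simp
  rw [← h, AlgHom.coe_comp] at hγ
  exact hγ.of_comp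

theorem aeval_single_eq_algebraMap_expand (γ : σ → R) (n : ℕ) (p : MvPolynomial σ A) :
    aeval (fun i => HahnSeries.single (n : ℤ) (γ i) : σ → LaurentSeries R) p
      = algebraMap (Polynomial R) (LaurentSeries R)
          (Polynomial.expand R n (aeval (fun i => Polynomial.C (γ i) * Polynomial.X) p)) := by
  induction p using MvPolynomial.induction_on with
  | C a =>
    rw [aeval_C, aeval_C, Polynomial.algebraMap_apply, Polynomial.expand_C,
      Polynomial.algebraMap_hahnSeries_apply, Polynomial.coe_C, HahnSeries.algebraMap_apply',
      PowerSeries.algebraMap_apply]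
  | add p q hp hq => simp [hp, hq]
  | mul_X p i hp => simp [hp, HahnSeries.ofPowerSeries_X_pow]

theorem injective_aeval_single {γ : σ → R}
    (hγ : Function.Injective (aeval γ : MvPolynomial σ A →ₐ[A] R)) {n : ℕ} (hn : 0 < n) :
    Function.Injective (aeval (fun i => HahnSeries.single (n : ℤ) (γ i)) :
      MvPolynomial σ A →ₐ[A] LaurentSeries R) := by
  intro p q hpq
  simp only [aeval_single_eq_algebraMap_expand] at hpq
  exact injective_aeval_C_mul_X hγ <| Polynomial.expand_injective hn <|
    Polynomial.algebraMap_hahnSeries_injective ℤ hpq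

end LaurentSeries

theorem isRelPrime_one_add_X_mul_X_X_add_X {k : Type*} [Field k] :
    IsRelPrime (1 + X 0 * X 1 : MvPolynomial (Fin 2) k) (X 0 + X 1) := by
  intro r hu hv
  obtain ⟨s, hs⟩ := hv
  have hsum : (X 0 + X 1 : MvPolynomial (Fin 2) k) ≠ 0 := fun h => by
    simpa using congrArg (coeff (Finsupp.single 0 1)) h
  have hr : r ≠ 0 := by rintro rfl; simp_all
  have hs0 : s ≠ 0 := by rintro rfl; simp_all
  have hdeg : r.totalDegree + s.totalDegree ≤ 1 := by
    rw [← totalDegree_mul_of_isDomain hr hs0, ← hs]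
    exact (totalDegree_add _ _).trans (by simp)
  rcases Nat.le_one_iff_eq_zero_or_eq_one.mp (le_of_add_le_left hdeg) with h | h
  · rw [totalDegree_eq_zero_iff_eq_C.mp h] at hr ⊢
    exact (Ne.isUnit fun h0 => hr (by rw [h0, C_0])).map C
  · -- `r` is then a scalar multiple of `X 0 + X 1`, which does not divide `1 + X 0 * X 1`.
    obtain ⟨c, rfl⟩ : ∃ c, s = C c := ⟨_, totalDegree_eq_zero_iff_eq_C.mp (by omega)⟩
    have hc : c ≠ 0 := by rintro rfl; simp at hs0
    have : (X 0 + X 1 : MvPolynomial (Fin 2) k) ∣ 1 + X 0 * X 1 :=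
      (Dvd.intro _ (by rw [hs, mul_assoc, ← C_mul, mul_inv_cancel₀ hc, C_1, mul_one])).trans hu
    simpa using map_dvd (constantCoeff (R := k) (σ := Fin 2)) this

section LastVariable

variable (R : Type*) [CommSemiring R] (n : ℕ)

noncomputable def finSuccEquivLast :
    MvPolynomial (Fin (n + 1)) R ≃ₐ[R] Polynomial (MvPolynomial (Fin n) R) :=
  (renameEquiv R _root_.finSuccEquivLast).trans (optionEquivLeft R (Fin n))

variable {R n}

@[simp]
theorem finSuccEquivLast_X_castSucc (i : Fin n) :
    finSuccEquivLast R n (X i.castSucc) = Polynomial.C (X i) := by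
  simp [finSuccEquivLast, finSuccEquivLast_castSucc, optionEquivLeft_X_some]

@[simp]
theorem finSuccEquivLast_X_last : finSuccEquivLast R n (X (Fin.last n)) = Polynomial.X := by
  simp [finSuccEquivLast, finSuccEquivLast_last, optionEquivLeft_X_none]

end LastVariable

end MvPolynomial

namespace SklyaninParameter

local notation "S" => MvPolynomial (Fin 2) ℚ
local notation "k₀" => FractionRing (MvPolynomial (Fin 2) ℚ)

theorem injective_aeval_algebraMap_X :
    Function.Injective (aeval (fun i => algebraMap S k₀ (X i)) : S →ₐ[ℚ] k₀) := by
  have h : (aeval fun i => algebraMap S k₀ (X i)) = IsScalarTower.toAlgHom ℚ S k₀ :=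
    algHom_ext fun i => by simp
  rw [h]
  exact IsFractionRing.injective S k₀

noncomputable def scaleEmbedding : k₀ →+* LaurentSeries k₀ :=
  IsFractionRing.lift (g := (aeval fun i => HahnSeries.single (2 : ℤ) (algebraMap S k₀ (X i)) :
      S →ₐ[ℚ] LaurentSeries k₀).toRingHom)
    (injective_aeval_single injective_aeval_algebraMap_X two_pos)

theorem scaleEmbedding_algebraMap_X (i : Fin 2) :
    scaleEmbedding (algebraMap S k₀ (X i)) = HahnSeries.single 2 (algebraMap S k₀ (X i)) := by
  simp [scaleEmbedding]

/-- `finSuccEquivLast` makes `α₃` the polynomial variable over `ℚ[α₁, α₂]`, which is then sent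
to `-(β₁ + β₂) / (1 + β₁β₂)` before scaling `βᵢ ↦ βᵢh²`. -/
noncomputable def toLaurent : MvPolynomial (Fin 3) ℚ →+* LaurentSeries k₀ :=
  scaleEmbedding.comp ((Polynomial.aeval
      (-algebraMap S k₀ (X 0 + X 1) / algebraMap S k₀ (1 + X 0 * X 1))).toRingHom.comp
    (finSuccEquivLast ℚ 2).toRingHom)

theorem toLaurent_X_castSucc (i : Fin 2) :
    toLaurent (X i.castSucc) = HahnSeries.single 2 (algebraMap S k₀ (X i)) := by
  simp [toLaurent, scaleEmbedding_algebraMap_X]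

theorem toLaurent_X_two :
    toLaurent (X 2) = -(HahnSeries.single 2 (algebraMap S k₀ (X 0)) +
        HahnSeries.single 2 (algebraMap S k₀ (X 1))) /
      (1 + HahnSeries.single 2 (algebraMap S k₀ (X 0)) *
        HahnSeries.single 2 (algebraMap S k₀ (X 1))) := by
  have h2 : finSuccEquivLast ℚ 2 (X 2) = Polynomial.X := finSuccEquivLast_X_last
  simp [toLaurent, h2, map_div₀, scaleEmbedding_algebraMap_X]

theorem ker_toLaurent :
    RingHom.ker toLaurent = Ideal.span {X 0 + X 1 + X 2 + X 0 * X 1 * X 2} := by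
  have hf : finSuccEquivLast ℚ 2 (X 0 + X 1 + X 2 + X 0 * X 1 * X 2) =
      Polynomial.C (1 + X 0 * X 1) * Polynomial.X + Polynomial.C (X 0 + X 1) := by
    have h0 : finSuccEquivLast ℚ 2 (X 0) = Polynomial.C (X 0) := finSuccEquivLast_X_castSucc 0
    have h1 : finSuccEquivLast ℚ 2 (X 1) = Polynomial.C (X 1) := finSuccEquivLast_X_castSucc 1
    have h2 : finSuccEquivLast ℚ 2 (X 2) = Polynomial.X := finSuccEquivLast_X_last
    simp only [map_add, map_mul, map_one, h0, h1, h2]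
    ring
  have hu : (1 + X 0 * X 1 : S) ≠ 0 := fun h => by simpa using congrArg constantCoeff h
  ext p
  have hker := Ideal.ext_iff.mp (Polynomial.ker_aeval_neg_div_eq_span_of_isRelPrime (K := k₀) hu
    isRelPrime_one_add_X_mul_X_X_add_X) (finSuccEquivLast ℚ 2 p)
  rw [Ideal.mem_span_singleton, ← hf, map_dvd_iff] at hker
  rw [Ideal.mem_span_singleton, ← hker, RingHom.mem_ker, RingHom.mem_ker, toLaurent,
    RingHom.comp_apply, map_eq_zero_iff _ scaleEmbedding.injective]
  rfl

end SklyaninParameter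

/-- The map `α₁ ↦ β₁h²`, `α₂ ↦ β₂h²`, `α₃ ↦ -(β₁h²+β₂h²)/(1+β₁β₂h⁴)` defines an
injective field homomorphism from
`L = ℚ(α₁,α₂,α₃ ; α₁+α₂+α₃+α₁α₂α₃ = 0)` into `ℚ(β₁,β₂)((h))`. -/
theorem sklyanin_parameter_field_embedding :
    let Q := MvPolynomial (Fin 3) ℚ ⧸
      Ideal.span {(X 0 + X 1 + X 2 + X 0 * X 1 * X 2 : MvPolynomial (Fin 3) ℚ)}
    let L := FractionRing Q
    let k0 := FractionRing (MvPolynomial (Fin 2) ℚ)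
    let β1 : k0 := algebraMap (MvPolynomial (Fin 2) ℚ) k0 (X 0)
    let β2 : k0 := algebraMap (MvPolynomial (Fin 2) ℚ) k0 (X 1)
    let a1 : LaurentSeries k0 := HahnSeries.single (2 : ℤ) β1
    let a2 : LaurentSeries k0 := HahnSeries.single (2 : ℤ) β2
    let α : Fin 3 → L := fun i =>
      algebraMap Q L (Ideal.Quotient.mk _ (X i))
    ∃ φ : L →+* LaurentSeries k0,
      Function.Injective φ ∧
      φ (α 0) = a1 ∧ φ (α 1) = a2 ∧ φ (α 2) = -(a1 + a2) / (1 + a1 * a2) := by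
  intro Q L k0 β1 β2 a1 a2 α
  have hι := RingHom.lift_injective_of_ker_le_ideal _ (f := SklyaninParameter.toLaurent)
    (fun p hp => RingHom.mem_ker.mp (SklyaninParameter.ker_toLaurent.ge hp))
    SklyaninParameter.ker_toLaurent.le
  have : IsDomain Q := hι.isDomain
  let φ : L →+* LaurentSeries k0 := IsFractionRing.lift hι
  refine ⟨φ, φ.injective, ?_, ?_, ?_⟩
  · exact (IsFractionRing.lift_algebraMap hι _).trans (SklyaninParameter.toLaurent_X_castSucc 0)
  · exact (IsFractionRing.lift_algebraMap hι _).trans (SklyaninParameter.toLaurent_X_castSucc 1)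
  · exact (IsFractionRing.lift_algebraMap hι _).trans SklyaninParameter.toLaurent_X_two
end

section
/- For the Sklyanin Poisson bracket on ℝ = k_0[x_0,x_1,x_2,x_3], the top form δ = dx_1∧dx_2∧dx_3∧dx_0 is a cycle of the Poisson boundary: ∂_4(δ) = 0 in Ω³(ℝ). -/
open MvPolynomial

variable (k0 : Type*) [Field k0] [CharZero k0]

local notation "R" => MvPolynomial (Fin 4) k0

/-- The element `F₀ dF₁∧···∧dFₙ` of `Ωⁿ(ℛ) = ⋀[ℛ]ⁿ Ω[ℛ⁄k₀]`. -/
noncomputable def wform (n : ℕ) (F0 : R) (v : Fin n → Ω[R⁄k0]) :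
    ⋀[R]^n (Ω[R⁄k0]) :=
  ⟨F0 • ExteriorAlgebra.ιMulti R n v,
    Submodule.smul_mem _ _ (ExteriorAlgebra.ιMulti_range R n (Set.mem_range_self v))⟩

/-! Each Sklyanin bracket `{xᵢ, xⱼ}` is a constant multiple of the product of the two
remaining variables, so `d{xᵢ, xⱼ}` lies in the span of the two differentials it is wedged
with in `∂₄ δ`, and each of these six terms vanishes. The four terms `{1, xᵢ}` vanish by the
Leibniz rule. -/

theorem ExteriorAlgebra.ιMulti_three_eq_zero_of_mem_span_pair {S M : Type*} [CommRing S]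
    [AddCommGroup M] [Module S M] {x a b : M} (hx : x ∈ Submodule.span S {a, b}) :
    ιMulti S 3 ![x, a, b] = 0 := by
  obtain ⟨r, s, rfl⟩ := Submodule.mem_span_pair.mp hx
  have ha : (ιMulti S 3).toMultilinearMap (Fin.cons a ![a, b]) = 0 :=
    (ιMulti S 3).map_eq_zero_of_eq _ (i := 0) (j := 1) rfl (by decide)
  have hb : (ιMulti S 3).toMultilinearMap (Fin.cons b ![a, b]) = 0 :=
    (ιMulti S 3).map_eq_zero_of_eq _ (i := 0) (j := 2) rfl (by decide)
  change (ιMulti S 3).toMultilinearMap (Fin.cons (r • a + s • b) ![a, b]) = 0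
  rw [MultilinearMap.cons_add, MultilinearMap.cons_smul, MultilinearMap.cons_smul, ha, hb,
    smul_zero, smul_zero, add_zero]

theorem KaehlerDifferential.D_smul_mul_mem_span_pair {K S : Type*} [CommRing K] [CommRing S]
    [Algebra K S] (c : K) (u v : S) :
    D K S (c • (u * v)) ∈ Submodule.span S {D K S u, D K S v} := by
  rw [Derivation.map_smul, Derivation.leibniz]
  refine Submodule.smul_of_tower_mem _ c (add_mem ?_ ?_) <;>
    exact Submodule.smul_mem _ _ (Submodule.subset_span (by simp))

omit [CharZero k0] in
theorem wform_zero (n : ℕ) (v : Fin n → Ω[R⁄k0]) : wform k0 n 0 v = 0 :=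
  Subtype.ext (zero_smul _ _)

omit [CharZero k0] in
theorem wform_three_eq_zero_of_mem_span_pair (F0 : R) {x a b : Ω[R⁄k0]}
    (hx : x ∈ Submodule.span R {a, b}) : wform k0 3 F0 ![x, a, b] = 0 :=
  Subtype.ext <| by
    simp only [wform, ExteriorAlgebra.ιMulti_three_eq_zero_of_mem_span_pair hx, smul_zero]
    rfl

omit [CharZero k0] in
theorem D_C_mul_mul_mem_span_pair (c : k0) (u v : R) :
    KaehlerDifferential.D k0 R (C c * (u * v)) ∈
      Submodule.span R {KaehlerDifferential.D k0 R u, KaehlerDifferential.D k0 R v} := by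
  rw [C_mul']
  exact KaehlerDifferential.D_smul_mul_mem_span_pair c u v

theorem sklyanin_delta_is_poisson_cycle
    (β1 β2 β3 : k0)
    (br : R →ₗ[k0] R →ₗ[k0] R)
    (hskew : ∀ f g : R, br f g = - br g f)
    (hleib : ∀ f g h : R, br f (g * h) = g * br f h + br f g * h)
    (h01 : br (X 0) (X 1) = C (-2 * β1) * (X 2 * X 3))
    (h02 : br (X 0) (X 2) = C (-2 * β2) * (X 3 * X 1))
    (h03 : br (X 0) (X 3) = C (-2 * β3) * (X 1 * X 2))
    (h12 : br (X 1) (X 2) = C (-2 : k0) * (X 0 * X 3))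
    (h23 : br (X 2) (X 3) = C (-2 : k0) * (X 0 * X 1))
    (h31 : br (X 3) (X 1) = C (-2 : k0) * (X 0 * X 2))
    (d4 : (⋀[R]^4 (Ω[R⁄k0])) →ₗ[k0] (⋀[R]^3 (Ω[R⁄k0])))
    (hd4 : ∀ F0 F1 F2 F3 F4 : R,
      letI D := KaehlerDifferential.D k0 R
      d4 (wform k0 4 F0 ![D F1, D F2, D F3, D F4]) =
        wform k0 3 (br F0 F1) ![D F2, D F3, D F4]
          - wform k0 3 (br F0 F2) ![D F1, D F3, D F4]
          + wform k0 3 (br F0 F3) ![D F1, D F2, D F4]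
          - wform k0 3 (br F0 F4) ![D F1, D F2, D F3]
          - wform k0 3 F0 ![D (br F1 F2), D F3, D F4]
          + wform k0 3 F0 ![D (br F1 F3), D F2, D F4]
          - wform k0 3 F0 ![D (br F1 F4), D F2, D F3]
          - wform k0 3 F0 ![D (br F2 F3), D F1, D F4]
          + wform k0 3 F0 ![D (br F2 F4), D F1, D F3]
          - wform k0 3 F0 ![D (br F3 F4), D F1, D F2]) :
    letI D := KaehlerDifferential.D k0 R
    d4 (wform k0 4 1 ![D (X 1), D (X 2), D (X 3), D (X 0)]) = 0 := by
  set D := KaehlerDifferential.D k0 R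
  have one_br : ∀ f : R, br 1 f = 0 := fun f => by
    have h := hleib f 1 1
    rw [one_mul, one_mul, mul_one, right_eq_add] at h
    rw [hskew, h, neg_zero]
  have mem := D_C_mul_mul_mem_span_pair k0
  have s12 : D (br (X 1) (X 2)) ∈ Submodule.span R {D (X 3), D (X 0)} := by
    rw [h12, Set.pair_comm]; exact mem _ _ _
  have s13 : D (br (X 1) (X 3)) ∈ Submodule.span R {D (X 2), D (X 0)} := by
    rw [hskew, h31, map_neg, Set.pair_comm]; exact neg_mem (mem _ _ _)
  have s10 : D (br (X 1) (X 0)) ∈ Submodule.span R {D (X 2), D (X 3)} := by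
    rw [hskew, h01, map_neg]; exact neg_mem (mem _ _ _)
  have s23 : D (br (X 2) (X 3)) ∈ Submodule.span R {D (X 1), D (X 0)} := by
    rw [h23, Set.pair_comm]; exact mem _ _ _
  have s20 : D (br (X 2) (X 0)) ∈ Submodule.span R {D (X 1), D (X 3)} := by
    rw [hskew, h02, map_neg, Set.pair_comm]; exact neg_mem (mem _ _ _)
  have s30 : D (br (X 3) (X 0)) ∈ Submodule.span R {D (X 1), D (X 2)} := by
    rw [hskew, h03, map_neg]; exact neg_mem (mem _ _ _)
  have vanish {x a b : Ω[R⁄k0]} (hx : x ∈ Submodule.span R {a, b}) :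
      wform k0 3 1 ![x, a, b] = 0 :=
    wform_three_eq_zero_of_mem_span_pair k0 1 hx
  rw [hd4]
  simp only [one_br, wform_zero, vanish s12, vanish s13, vanish s10, vanish s23, vanish s20,
    vanish s30, sub_zero, add_zero]
end
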